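/- arXiv:0707.4203 — 5 statements merged into one kernel-verified Lean document; each statement's English description precedes it below -/
import Mathlib

section
/- Let Φ be an N×d real matrix satisfying the Restricted Isometry Condition with parameters (3n, 0.2). Then every n-sparse vector x ∈ ℝ^d is the unique solution to the convex program min ‖u‖₁ subject to Φu = Φx; that is, for every u ∈ ℝ^d with Φu = Φx and u ≠ x, one has ‖u‖₁ > ‖x‖₁. -/
open Finset

noncomputable section

/-- A vector `v ∈ ℝ^d` is `m`-sparse if its support has at most `m` elements. -/
def msparse {d : ℕ} (m : ℕ) (v : EuclideanSpace ℝ (Fin d)) : Prop :=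
  (Finset.univ.filter fun i => v i ≠ 0).card ≤ m

/-- The Restricted Isometry Condition with parameters `(m, ε)`. -/
def RIC {N d : ℕ} (Φ : Matrix (Fin N) (Fin d) ℝ) (m : ℕ) (ε : ℝ) : Prop :=
  ∀ v : EuclideanSpace ℝ (Fin d), msparse m v →
    (1 - ε) * ‖v‖ ≤ ‖Matrix.toEuclideanLin Φ v‖ ∧
    ‖Matrix.toEuclideanLin Φ v‖ ≤ (1 + ε) * ‖v‖

/-- The support of a vector, as a `Finset`. -/
def suppF {d : ℕ} (v : EuclideanSpace ℝ (Fin d)) : Finset (Fin d) :=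
  Finset.univ.filter fun i => v i ≠ 0

/-- `restr S w = w|_S`: the vector equal to `w` on `S` and zero elsewhere. -/
def restr {d : ℕ} (S : Finset (Fin d)) (w : EuclideanSpace ℝ (Fin d)) :
    EuclideanSpace ℝ (Fin d) :=
  WithLp.toLp 2 (fun i => if i ∈ S then w i else 0)

/-- `colSpan Φ S = range(Φ_S)`: the span of the columns of `Φ` indexed by `S`. -/
def colSpan {N d : ℕ} (Φ : Matrix (Fin N) (Fin d) ℝ) (S : Finset (Fin d)) :
    Submodule ℝ (EuclideanSpace ℝ (Fin N)) :=
  Submodule.span ℝ ((fun j => (WithLp.toLp 2 (fun i => Φ i j) : EuclideanSpace ℝ (Fin N))) '' (S : Set (Fin d)))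

/-!
Let `h = u - x ∈ ker Φ` and `T = supp x`. Split `Tᶜ` greedily into blocks `T₁, T₂, …` carrying the
`n` largest remaining values of `|h i|`. Polarization turns RIC into near-orthogonality,
`|⟪Φv, Φw⟫| ≤ 2ε ‖v‖ ‖w‖` for disjointly supported `v, w` with `3n`-sparse sum, so
`Φ h_{T ∪ T₁} = -∑_{j ≥ 2} Φ h_{Tⱼ}` gives `(1 - ε)² ‖h_{T ∪ T₁}‖ ≤ 2ε ∑_{j ≥ 2} ‖h_{Tⱼ}‖`.
Every entry on `T_{j+1}` is at most the average over `Tⱼ`, so `√n ‖h_{T_{j+1}}‖ ≤ ‖h_{Tⱼ}‖₁`, and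
Cauchy–Schwarz gives `‖h_T‖₁ ≤ √n ‖h_{T ∪ T₁}‖`. Hence `(1 - ε)² ‖h_T‖₁ ≤ 2ε ‖h_{Tᶜ}‖₁`; as
`2ε < (1 - ε)²` for `ε = 0.2`, this is the null space property `‖h_T‖₁ < ‖h_{Tᶜ}‖₁`, which forces
`‖x‖₁ < ‖u‖₁`.
-/

section Blocks

variable {α : Type*}

structure Finset.SortedBlocks (U : Finset α) (g : α → ℝ) (n K : ℕ) (B : ℕ → Finset α) :
    Prop where
  subset : ∀ j, B j ⊆ U
  pairwise_disjoint : Pairwise fun i j => Disjoint (B i) (B j)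
  exists_mem : ∀ i ∈ U, ∃ j < K, i ∈ B j
  card_le : ∀ j, #(B j) ≤ n
  card_eq : ∀ j, (B (j + 1)).Nonempty → #(B j) = n
  le_of_mem : ∀ j, ∀ a ∈ B j, ∀ b ∈ B (j + 1), g b ≤ g a

variable [DecidableEq α]

theorem Finset.exists_subset_card_eq_forall_le (U : Finset α) (g : α → ℝ) {k : ℕ}
    (hk : k ≤ #U) : ∃ A ⊆ U, #A = k ∧ ∀ a ∈ A, ∀ b ∈ U \ A, g b ≤ g a := by
  induction k with
  | zero => exact ⟨∅, empty_subset U, rfl, by simp⟩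
  | succ k ih =>
    obtain ⟨A, hAU, hA, hAg⟩ := ih (by omega)
    have hne : (U \ A).Nonempty := by
      rw [← card_pos, card_sdiff_of_subset hAU]; omega
    obtain ⟨c, hc, hcmax⟩ := (U \ A).exists_max_image g hne
    have hcA : c ∉ A := (mem_sdiff.mp hc).2
    refine ⟨insert c A, insert_subset (mem_sdiff.mp hc).1 hAU,
      by rw [card_insert_of_notMem hcA, hA], fun a ha b hb => ?_⟩
    have hb' : b ∈ U \ A := by
      simp only [mem_sdiff, mem_insert, not_or] at hb ⊢; exact ⟨hb.1, hb.2.2⟩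
    rcases mem_insert.mp ha with rfl | ha
    · exact hcmax b hb'
    · exact hAg a ha b hb'

theorem Finset.SortedBlocks.biUnion_range_eq {U : Finset α} {g : α → ℝ} {n K L : ℕ}
    {B : ℕ → Finset α} (hB : U.SortedBlocks g n K B) (hKL : K ≤ L) : (range L).biUnion B = U := by
  ext i
  simp only [mem_biUnion, mem_range]
  refine ⟨fun ⟨j, _, hij⟩ => hB.subset j hij, fun hi => ?_⟩
  obtain ⟨j, hj, hij⟩ := hB.exists_mem i hi
  exact ⟨j, by omega, hij⟩

theorem Finset.exists_sortedBlocks (g : α → ℝ) {n : ℕ} (hn : 0 < n) (U : Finset α) :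
    ∃ K B, U.SortedBlocks g n K B := by
  induction U using Finset.strongInduction with
  | H U ih =>
  by_cases hU : #U ≤ n
  · refine ⟨1, fun j => if j = 0 then U else ∅, ⟨fun j => ?_, fun i j hij => ?_,
      fun i hi => ⟨0, one_pos, by simpa using hi⟩, fun j => ?_, fun j hj => ?_,
      fun j a _ b hb => ?_⟩⟩
    · split_ifs <;> simp
    · rcases eq_or_ne i 0 with rfl | hi
      · simp [Ne.symm hij]
      · simp [hi]
    · split_ifs <;> simp [hU]
    · simp at hj
    · simp at hb
  obtain ⟨A, hAU, hA, hAg⟩ := U.exists_subset_card_eq_forall_le g (k := n) (by omega)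
  have hAne : A.Nonempty := by rw [← card_pos]; omega
  obtain ⟨K, B, hB⟩ := ih (U \ A) (sdiff_ssubset hAU hAne)
  refine ⟨K + 1, fun j => Nat.casesOn j A B, ⟨fun j => ?_, fun i j hij => ?_, fun i hi => ?_,
    fun j => ?_, fun j hj => ?_, fun j => ?_⟩⟩
  · cases j with
    | zero => exact hAU
    | succ j => exact (hB.subset j).trans sdiff_subset
  · cases i <;> cases j
    · exact absurd rfl hij
    · exact disjoint_of_subset_right (hB.subset _) disjoint_sdiff
    · exact disjoint_of_subset_left (hB.subset _) sdiff_disjoint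
    · exact hB.pairwise_disjoint (by simpa using hij)
  · by_cases hiA : i ∈ A
    · exact ⟨0, by omega, hiA⟩
    · obtain ⟨j, hj, hij⟩ := hB.exists_mem i (mem_sdiff.mpr ⟨hi, hiA⟩)
      exact ⟨j + 1, by omega, hij⟩
  · cases j with
    | zero => exact hA.le
    | succ j => exact hB.card_le j
  · cases j with
    | zero => exact hA
    | succ j => exact hB.card_eq j hj
  · cases j with
    | zero => exact fun a ha b hb => hAg a ha b (hB.subset 0 hb)
    | succ j => exact hB.le_of_mem j

end Blocks

theorem Finset.sum_sq_mul_le_sq_sum {ι : Type*} {A B : Finset ι} {g : ι → ℝ} {n : ℕ}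
    (hg : ∀ i, 0 ≤ g i) (hAB : ∀ a ∈ A, ∀ b ∈ B, g b ≤ g a) (hB : #B ≤ n) (hA : n ≤ #A) :
    (∑ b ∈ B, g b ^ 2) * n ≤ (∑ a ∈ A, g a) ^ 2 := by
  rcases Nat.eq_zero_or_pos n with rfl | hn
  · simp [sq_nonneg]
  have hbound : ∀ b ∈ B, n * g b ≤ ∑ a ∈ A, g a := fun b hb =>
    calc n * g b ≤ #A * g b := mul_le_mul_of_nonneg_right (by exact_mod_cast hA) (hg b)
      _ = ∑ _a ∈ A, g b := by simp
      _ ≤ ∑ a ∈ A, g a := sum_le_sum fun a ha => hAB a ha b hb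
  have hBA : ∑ b ∈ B, g b ≤ ∑ a ∈ A, g a := by
    refine le_of_mul_le_mul_left ?_ (show (0 : ℝ) < n by exact_mod_cast hn)
    calc n * ∑ b ∈ B, g b ≤ ∑ _b ∈ B, ∑ a ∈ A, g a := by rw [mul_sum]; exact sum_le_sum hbound
      _ = #B * ∑ a ∈ A, g a := by simp
      _ ≤ n * ∑ a ∈ A, g a :=
        mul_le_mul_of_nonneg_right (by exact_mod_cast hB) (sum_nonneg fun a _ => hg a)
  calc (∑ b ∈ B, g b ^ 2) * n = ∑ b ∈ B, g b * (n * g b) := by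
        rw [sum_mul]; exact sum_congr rfl fun b _ => by ring
    _ ≤ ∑ b ∈ B, g b * ∑ a ∈ A, g a :=
        sum_le_sum fun b hb => mul_le_mul_of_nonneg_left (hbound b hb) (hg b)
    _ = (∑ b ∈ B, g b) * ∑ a ∈ A, g a := by rw [sum_mul]
    _ ≤ (∑ a ∈ A, g a) ^ 2 := by
        rw [sq]; exact mul_le_mul_of_nonneg_right hBA (sum_nonneg fun a _ => hg a)

theorem sum_abs_lt_sum_abs_of_support_subset {ι : Type*} [Fintype ι] [DecidableEq ι]
    {T : Finset ι} {x y : ι → ℝ} (hx : ∀ i ∉ T, x i = 0)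
    (hyx : ∑ i ∈ T, |y i - x i| < ∑ i ∈ Tᶜ, |y i - x i|) : ∑ i, |x i| < ∑ i, |y i| := by
  have hxT : ∑ i, |x i| = ∑ i ∈ T, |x i| :=
    (sum_subset (subset_univ T) fun i _ hi => by rw [hx i hi, abs_zero]).symm
  have hT : ∑ i ∈ T, |x i| - ∑ i ∈ T, |y i - x i| ≤ ∑ i ∈ T, |y i| := by
    rw [← sum_sub_distrib]
    exact sum_le_sum fun i _ => by
      linarith [abs_sub_abs_le_abs_sub (x i) (y i), abs_sub_comm (x i) (y i)]
  have hTc : ∑ i ∈ Tᶜ, |y i - x i| = ∑ i ∈ Tᶜ, |y i| :=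
    sum_congr rfl fun i hi => by rw [hx i (mem_compl.mp hi), sub_zero]
  rw [hxT, ← sum_add_sum_compl T fun i => |y i|]
  linarith

namespace EuclideanSpace

variable {d : ℕ}

@[simp]
theorem restr_apply (S : Finset (Fin d)) (w : EuclideanSpace ℝ (Fin d)) (i : Fin d) :
    restr S w i = if i ∈ S then w i else 0 := rfl

@[simp]
theorem mem_suppF {v : EuclideanSpace ℝ (Fin d)} {i : Fin d} : i ∈ suppF v ↔ v i ≠ 0 := by
  simp [suppF]

theorem msparse_of_suppF_subset {m : ℕ} {S : Finset (Fin d)} {v : EuclideanSpace ℝ (Fin d)}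
    (hv : suppF v ⊆ S) (hS : #S ≤ m) : msparse m v :=
  (card_le_card hv).trans hS

theorem suppF_restr_subset (S : Finset (Fin d)) (w : EuclideanSpace ℝ (Fin d)) :
    suppF (restr S w) ⊆ S := fun i hi => by
  by_contra hiS
  simp [hiS] at hi

theorem suppF_add_subset (v w : EuclideanSpace ℝ (Fin d)) :
    suppF (v + w) ⊆ suppF v ∪ suppF w := fun i hi => by
  by_contra h
  simp_all

theorem suppF_sub_subset (v w : EuclideanSpace ℝ (Fin d)) :
    suppF (v - w) ⊆ suppF v ∪ suppF w := fun i hi => by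
  by_contra h
  simp_all

theorem suppF_smul_subset (c : ℝ) (v : EuclideanSpace ℝ (Fin d)) : suppF (c • v) ⊆ suppF v :=
  fun i hi => by simp_all

@[simp]
theorem suppF_neg (v : EuclideanSpace ℝ (Fin d)) : suppF (-v) = suppF v := by
  ext i; simp

theorem inner_eq_zero_of_disjoint_suppF {v w : EuclideanSpace ℝ (Fin d)}
    (hvw : Disjoint (suppF v) (suppF w)) : inner ℝ v w = 0 := by
  rw [PiLp.inner_apply]
  refine sum_eq_zero fun i _ => ?_
  by_cases hv : v i = 0
  · simp [hv]
  · have hw : w i = 0 := by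
      by_contra hw
      exact disjoint_left.mp hvw (mem_suppF.mpr hv) (mem_suppF.mpr hw)
    simp [hw]

@[simp]
theorem restr_univ (w : EuclideanSpace ℝ (Fin d)) : restr univ w = w := by
  ext i; simp

@[simp]
theorem restr_empty (w : EuclideanSpace ℝ (Fin d)) : restr ∅ w = 0 := by
  ext i; simp

theorem restr_union {S T : Finset (Fin d)} (hST : Disjoint S T) (w : EuclideanSpace ℝ (Fin d)) :
    restr (S ∪ T) w = restr S w + restr T w := by
  ext i
  by_cases hS : i ∈ S
  · simp [hS, disjoint_left.mp hST hS]
  · simp [hS]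

theorem restr_biUnion {ι : Type*} [DecidableEq ι] {s : Finset ι} {B : ι → Finset (Fin d)}
    (hB : (s : Set ι).PairwiseDisjoint B) (w : EuclideanSpace ℝ (Fin d)) :
    restr (s.biUnion B) w = ∑ j ∈ s, restr (B j) w := by
  induction s using Finset.induction_on with
  | empty => ext i; simp
  | insert a s ha ih =>
    rw [coe_insert] at hB
    rw [biUnion_insert, restr_union, sum_insert ha, ih (hB.subset (Set.subset_insert _ _))]
    exact (disjoint_biUnion_right _ _ _).mpr fun j hj =>
      hB (Set.mem_insert _ _) (Set.mem_insert_of_mem _ hj) (ne_of_mem_of_not_mem hj ha).symm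

theorem norm_restr_sq (S : Finset (Fin d)) (w : EuclideanSpace ℝ (Fin d)) :
    ‖restr S w‖ ^ 2 = ∑ i ∈ S, w i ^ 2 := by
  simp [EuclideanSpace.norm_sq_eq, apply_ite, sum_ite_mem]

theorem norm_restr_le_of_subset {S T : Finset (Fin d)} (hST : S ⊆ T)
    (w : EuclideanSpace ℝ (Fin d)) : ‖restr S w‖ ≤ ‖restr T w‖ := by
  rw [← pow_le_pow_iff_left₀ (norm_nonneg _) (norm_nonneg _) two_ne_zero, norm_restr_sq,
    norm_restr_sq]
  exact sum_le_sum_of_subset_of_nonneg hST fun i _ _ => sq_nonneg _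

theorem sum_abs_le_sqrt_card_mul_norm_restr (S : Finset (Fin d)) (w : EuclideanSpace ℝ (Fin d)) :
    ∑ i ∈ S, |w i| ≤ √(#S) * ‖restr S w‖ := by
  rw [← pow_le_pow_iff_left₀ (sum_nonneg fun i _ => abs_nonneg _) (by positivity) two_ne_zero,
    mul_pow, Real.sq_sqrt (Nat.cast_nonneg _), norm_restr_sq]
  simpa only [sq_abs] using sq_sum_le_card_mul_sum_sq (s := S) (f := fun i => |w i|)

theorem sqrt_mul_norm_restr_le_sum_abs {n : ℕ} {A B : Finset (Fin d)}
    {w : EuclideanSpace ℝ (Fin d)} (hAB : ∀ a ∈ A, ∀ b ∈ B, |w b| ≤ |w a|) (hB : #B ≤ n)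
    (hA : n ≤ #A) : √n * ‖restr B w‖ ≤ ∑ a ∈ A, |w a| := by
  rw [← pow_le_pow_iff_left₀ (by positivity) (sum_nonneg fun a _ => abs_nonneg _) two_ne_zero,
    mul_pow, Real.sq_sqrt (Nat.cast_nonneg _), norm_restr_sq, mul_comm]
  simpa only [sq_abs] using sum_sq_mul_le_sq_sum (fun i => abs_nonneg (w i)) hAB hB hA

end EuclideanSpace

open EuclideanSpace Matrix

namespace RIC

variable {N d m : ℕ} {Φ : Matrix (Fin N) (Fin d) ℝ} {ε : ℝ}

theorem eq_zero_of_msparse (hΦ : RIC Φ m ε) (hε : ε < 1) {v : EuclideanSpace ℝ (Fin d)}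
    (hv : msparse m v) (hΦv : toEuclideanLin Φ v = 0) : v = 0 := by
  have h := (hΦ v hv).1
  rw [hΦv, norm_zero] at h
  exact norm_le_zero_iff.mp (nonpos_of_mul_nonpos_right h (sub_pos.mpr hε))

theorem inner_le_of_disjoint (hΦ : RIC Φ m ε) (hε : ε ≤ 1) {S : Finset (Fin d)} (hS : #S ≤ m)
    {v w : EuclideanSpace ℝ (Fin d)} (hv : suppF v ⊆ S) (hw : suppF w ⊆ S)
    (hvw : Disjoint (suppF v) (suppF w)) :
    inner ℝ (toEuclideanLin Φ v) (toEuclideanLin Φ w) ≤ ε * (‖v‖ ^ 2 + ‖w‖ ^ 2) := by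
  have horth := inner_eq_zero_of_disjoint_suppF hvw
  have hsparse : ∀ z, suppF z ⊆ suppF v ∪ suppF w → msparse m z := fun z hz =>
    msparse_of_suppF_subset (hz.trans (union_subset hv hw)) hS
  have hup := pow_le_pow_left₀ (norm_nonneg _)
    (hΦ (v + w) (hsparse _ (suppF_add_subset v w))).2 2
  have hlow := pow_le_pow_left₀ (mul_nonneg (sub_nonneg.mpr hε) (norm_nonneg _))
    (hΦ (v - w) (hsparse _ (suppF_sub_subset v w))).1 2
  rw [map_add, norm_add_sq_real, mul_pow, norm_add_sq_real, horth] at hup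
  rw [map_sub, norm_sub_sq_real, mul_pow, norm_sub_sq_real, horth] at hlow
  linarith

theorem abs_inner_le_of_disjoint (hΦ : RIC Φ m ε) (hε : ε ≤ 1) {S : Finset (Fin d)}
    (hS : #S ≤ m) {v w : EuclideanSpace ℝ (Fin d)} (hv : suppF v ⊆ S) (hw : suppF w ⊆ S)
    (hvw : Disjoint (suppF v) (suppF w)) :
    |inner ℝ (toEuclideanLin Φ v) (toEuclideanLin Φ w)| ≤ 2 * ε * ‖v‖ * ‖w‖ := by
  suffices key : ∀ w : EuclideanSpace ℝ (Fin d), suppF w ⊆ S → Disjoint (suppF v) (suppF w) →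
      inner ℝ (toEuclideanLin Φ v) (toEuclideanLin Φ w) ≤ 2 * ε * ‖v‖ * ‖w‖ by
    refine abs_le.mpr ⟨?_, key w hw hvw⟩
    have := key (-w) (by rwa [suppF_neg]) (by rwa [suppF_neg])
    rw [map_neg, inner_neg_right, norm_neg] at this
    linarith
  clear hvw hw w
  intro w hw hvw
  rcases eq_or_ne v 0 with rfl | hv0
  · simp
  rcases eq_or_ne w 0 with rfl | hw0
  · simp
  have hunit := hΦ.inner_le_of_disjoint hε hS ((suppF_smul_subset ‖v‖⁻¹ v).trans hv)
    ((suppF_smul_subset ‖w‖⁻¹ w).trans hw)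
    (hvw.mono (suppF_smul_subset _ v) (suppF_smul_subset _ w))
  have hv' := norm_pos_iff.mpr hv0
  have hw' := norm_pos_iff.mpr hw0
  rw [norm_smul, norm_smul, norm_inv, norm_inv, norm_norm, norm_norm, inv_mul_cancel₀ hv'.ne',
    inv_mul_cancel₀ hw'.ne', map_smul, map_smul, real_inner_smul_left, real_inner_smul_right]
    at hunit
  calc inner ℝ (toEuclideanLin Φ v) (toEuclideanLin Φ w)
      = ‖v‖ * ‖w‖ * (‖v‖⁻¹ * (‖w‖⁻¹ * inner ℝ (toEuclideanLin Φ v) (toEuclideanLin Φ w))) := by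
        field_simp
    _ ≤ ‖v‖ * ‖w‖ * (ε * (1 ^ 2 + 1 ^ 2)) := mul_le_mul_of_nonneg_left hunit (by positivity)
    _ = 2 * ε * ‖v‖ * ‖w‖ := by ring

theorem sq_one_sub_mul_norm_le (hΦ : RIC Φ m ε) (hε₀ : 0 ≤ ε) (hε₁ : ε ≤ 1) {ι : Type*}
    {s : Finset ι} {v : EuclideanSpace ℝ (Fin d)} {w : ι → EuclideanSpace ℝ (Fin d)}
    (hv : msparse m v) (hvw : ∀ j ∈ s, Disjoint (suppF v) (suppF (w j)))
    (hm : ∀ j ∈ s, #(suppF v ∪ suppF (w j)) ≤ m)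
    (hker : toEuclideanLin Φ (v + ∑ j ∈ s, w j) = 0) :
    (1 - ε) ^ 2 * ‖v‖ ≤ 2 * ε * ∑ j ∈ s, ‖w j‖ := by
  rcases eq_or_ne v 0 with rfl | hv0
  · simpa using mul_nonneg (mul_nonneg zero_le_two hε₀) (sum_nonneg fun j _ => norm_nonneg (w j))
  have hΦv : toEuclideanLin Φ v = -∑ j ∈ s, toEuclideanLin Φ (w j) := by
    rw [map_add, map_sum] at hker
    exact eq_neg_of_add_eq_zero_left hker
  have hlow := pow_le_pow_left₀ (mul_nonneg (sub_nonneg.mpr hε₁) (norm_nonneg _)) (hΦ v hv).1 2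
  have hup : ‖toEuclideanLin Φ v‖ ^ 2 ≤ 2 * ε * ‖v‖ * ∑ j ∈ s, ‖w j‖ :=
    calc ‖toEuclideanLin Φ v‖ ^ 2
        = -∑ j ∈ s, inner ℝ (toEuclideanLin Φ v) (toEuclideanLin Φ (w j)) := by
          rw [← real_inner_self_eq_norm_sq]
          nth_rw 2 [hΦv]
          rw [inner_neg_right, inner_sum]
      _ ≤ ∑ j ∈ s, |inner ℝ (toEuclideanLin Φ v) (toEuclideanLin Φ (w j))| := by
          rw [← sum_neg_distrib]; exact sum_le_sum fun j _ => neg_le_abs _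
      _ ≤ ∑ j ∈ s, 2 * ε * ‖v‖ * ‖w j‖ := sum_le_sum fun j hj =>
          hΦ.abs_inner_le_of_disjoint hε₁ (hm j hj) subset_union_left subset_union_right (hvw j hj)
      _ = 2 * ε * ‖v‖ * ∑ j ∈ s, ‖w j‖ := by rw [mul_sum]
  have hv' := norm_pos_iff.mpr hv0
  refine le_of_mul_le_mul_right ?_ hv'
  linarith

theorem sq_one_sub_mul_norm_restr_union_le {n K : ℕ} {g : Fin d → ℝ} {B : ℕ → Finset (Fin d)}
    (hΦ : RIC Φ (3 * n) ε) (hε₀ : 0 ≤ ε) (hε₁ : ε ≤ 1) {h : EuclideanSpace ℝ (Fin d)}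
    (hh : toEuclideanLin Φ h = 0) {T : Finset (Fin d)} (hT : #T ≤ n)
    (hB : Tᶜ.SortedBlocks g n K B) :
    (1 - ε) ^ 2 * ‖restr (T ∪ B 0) h‖ ≤ 2 * ε * ∑ j ∈ range K, ‖restr (B (j + 1)) h‖ := by
  have hTB : ∀ j, Disjoint T (B j) := fun j =>
    disjoint_of_subset_right (hB.subset j) disjoint_compl_right
  have hsupp : ∀ S : Finset (Fin d), suppF (restr S h) ⊆ S := (suppF_restr_subset · h)
  refine hΦ.sq_one_sub_mul_norm_le hε₀ hε₁ ?_ (fun j _ => ?_) (fun j _ => ?_) ?_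
  · exact msparse_of_suppF_subset (hsupp _) ((card_union_le _ _).trans (by linarith [hB.card_le 0]))
  · exact (disjoint_union_left.mpr ⟨hTB _, hB.pairwise_disjoint (by omega)⟩).mono
      (hsupp _) (hsupp _)
  · calc #(suppF (restr (T ∪ B 0) h) ∪ suppF (restr (B (j + 1)) h))
        ≤ #(T ∪ B 0) + #(B (j + 1)) :=
          (card_le_card (union_subset_union (hsupp _) (hsupp _))).trans (card_union_le _ _)
      _ ≤ 3 * n := by linarith [card_union_le T (B 0), hB.card_le 0, hB.card_le (j + 1)]
  · rw [restr_union (hTB 0), add_assoc, add_comm (restr (B 0) h),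
      ← sum_range_succ' (fun j => restr (B j) h),
      ← restr_biUnion (hB.pairwise_disjoint.set_pairwise _), hB.biUnion_range_eq K.le_succ,
      ← restr_union disjoint_compl_right, union_compl, restr_univ, hh]

theorem sq_one_sub_mul_sum_abs_le {n : ℕ} (hΦ : RIC Φ (3 * n) ε) (hε₀ : 0 ≤ ε) (hε₁ : ε ≤ 1)
    {h : EuclideanSpace ℝ (Fin d)} (hh : toEuclideanLin Φ h = 0) {T : Finset (Fin d)}
    (hT : #T ≤ n) : (1 - ε) ^ 2 * ∑ i ∈ T, |h i| ≤ 2 * ε * ∑ i ∈ Tᶜ, |h i| := by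
  rcases Nat.eq_zero_or_pos n with rfl | hn
  · simpa [card_eq_zero.mp (Nat.le_zero.mp hT)] using
      mul_nonneg (mul_nonneg zero_le_two hε₀) (sum_nonneg fun i _ => abs_nonneg (h i))
  obtain ⟨K, B, hB⟩ := Tᶜ.exists_sortedBlocks (fun i => |h i|) hn
  have hT_le : ∑ i ∈ T, |h i| ≤ √n * ‖restr (T ∪ B 0) h‖ :=
    (sum_abs_le_sqrt_card_mul_norm_restr T h).trans (mul_le_mul
      (Real.sqrt_le_sqrt (by exact_mod_cast hT)) (norm_restr_le_of_subset subset_union_left h)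
      (norm_nonneg _) (Real.sqrt_nonneg _))
  have hblock_le : ∀ j, √n * ‖restr (B (j + 1)) h‖ ≤ ∑ i ∈ B j, |h i| := fun j => by
    rcases (B (j + 1)).eq_empty_or_nonempty with hempty | hne
    · simpa [hempty] using sum_nonneg fun i _ => abs_nonneg (h i)
    · exact sqrt_mul_norm_restr_le_sum_abs (hB.le_of_mem j) (hB.card_le _) (hB.card_eq j hne).ge
  have hblocks : ∑ j ∈ range K, ∑ i ∈ B j, |h i| = ∑ i ∈ Tᶜ, |h i| := by
    rw [← sum_biUnion (hB.pairwise_disjoint.set_pairwise _), hB.biUnion_range_eq le_rfl]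
  calc (1 - ε) ^ 2 * ∑ i ∈ T, |h i| ≤ (1 - ε) ^ 2 * (√n * ‖restr (T ∪ B 0) h‖) :=
        mul_le_mul_of_nonneg_left hT_le (sq_nonneg _)
    _ = √n * ((1 - ε) ^ 2 * ‖restr (T ∪ B 0) h‖) := by ring
    _ ≤ √n * (2 * ε * ∑ j ∈ range K, ‖restr (B (j + 1)) h‖) :=
        mul_le_mul_of_nonneg_left (hΦ.sq_one_sub_mul_norm_restr_union_le hε₀ hε₁ hh hT hB)
          (Real.sqrt_nonneg _)
    _ = 2 * ε * ∑ j ∈ range K, √n * ‖restr (B (j + 1)) h‖ := by rw [mul_left_comm, mul_sum]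
    _ ≤ 2 * ε * ∑ i ∈ Tᶜ, |h i| := by
        rw [← hblocks]
        exact mul_le_mul_of_nonneg_left (sum_le_sum fun j _ => hblock_le j) (by positivity)

end RIC

def NullSpaceProperty {N d : ℕ} (Φ : Matrix (Fin N) (Fin d) ℝ) (n : ℕ) : Prop :=
  ∀ h : EuclideanSpace ℝ (Fin d), toEuclideanLin Φ h = 0 → h ≠ 0 →
    ∀ T : Finset (Fin d), #T ≤ n → ∑ i ∈ T, |h i| < ∑ i ∈ Tᶜ, |h i|

theorem RIC.nullSpaceProperty {N d n : ℕ} {Φ : Matrix (Fin N) (Fin d) ℝ} {ε : ℝ}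
    (hΦ : RIC Φ (3 * n) ε) (hε₀ : 0 ≤ ε) (hε₁ : ε ≤ 1) (hε : 2 * ε < (1 - ε) ^ 2) :
    NullSpaceProperty Φ n := by
  intro h hh hne T hT
  have hoff : 0 < ∑ i ∈ Tᶜ, |h i| := by
    refine lt_of_le_of_ne (sum_nonneg fun i _ => abs_nonneg _) fun hzero => hne ?_
    have hsupp : suppF h ⊆ T := fun i hi => by
      by_contra hiT
      have := (sum_eq_zero_iff_of_nonneg fun i _ => abs_nonneg (h i)).mp hzero.symm i
        (mem_compl.mpr hiT)
      exact mem_suppF.mp hi (abs_eq_zero.mp this)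
    exact hΦ.eq_zero_of_msparse (by nlinarith) (msparse_of_suppF_subset hsupp (by omega)) hh
  refine lt_of_mul_lt_mul_left ?_ (sq_nonneg (1 - ε))
  exact (hΦ.sq_one_sub_mul_sum_abs_le hε₀ hε₁ hh hT).trans_lt (mul_lt_mul_of_pos_right hε hoff)

/-- Sparse recovery under RIC: if `Φ` satisfies RIC with parameters `(3n, 0.2)`, then every
`n`-sparse vector `x` is the unique minimizer of the `ℓ₁`-norm among vectors with the same
measurements: any other `u` with `Φu = Φx` has strictly larger `ℓ₁`-norm. -/
theorem sparse_recovery_via_L1 {N d n : ℕ} (Φ : Matrix (Fin N) (Fin d) ℝ)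
    (hΦ : RIC Φ (3 * n) 0.2)
    (x : EuclideanSpace ℝ (Fin d)) (hx : msparse n x)
    (u : EuclideanSpace ℝ (Fin d))
    (hu : Matrix.toEuclideanLin Φ u = Matrix.toEuclideanLin Φ x)
    (hne : u ≠ x) :
    (∑ i, |x i|) < ∑ i, |u i| := by
  have hnull := hΦ.nullSpaceProperty (by norm_num) (by norm_num) (by norm_num) (u - x)
    (by rw [map_sub, hu, sub_self]) (sub_ne_zero.mpr hne) (suppF x) hx
  simp only [PiLp.sub_apply] at hnull
  exact sum_abs_lt_sum_abs_of_support_subset (fun i hi => by simpa using hi) hnull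
end
end

section
/- (Local approximation.) Assume the N×d real matrix Φ satisfies the Restricted Isometry Condition with parameters (2n, ε), where 0 < ε ≤ 0.03. Then for every n-sparse vector v ∈ ℝ^d and every index set I ⊆ {1,…,d} with |I| ≤ n, the observation vector u = Φ*Φv satisfies ‖u|_I − v|_I‖₂ ≤ 2.03 ε ‖v‖₂. -/
/-!
Let `A x = Φx` and `δ = 2ε + ε²`. On the coordinate subspace of vectors supported in a set of at most
`2n` indices, RIC squares to `|‖Ax‖² - ‖x‖²| ≤ δ‖x‖²`, and polarization turns this into
`|⟪Ax, Ay⟫ - ⟪x, y⟫| ≤ δ‖x‖‖y‖`. For `w = (Φ*Φv - v)|_I`, which lives with `v` on `I ∪ supp v`,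
`⟪Aw, Av⟫ - ⟪w, v⟫ = ⟪w, Φ*Φv - v⟫ = ‖w‖²`, so `‖w‖ ≤ δ‖v‖ ≤ 2.03ε‖v‖` once `ε ≤ 0.03`.
-/
open Finset

noncomputable section

open RealInnerProductSpace

def IsNearIsometryOn {E F : Type*} [NormedAddCommGroup E] [NormedAddCommGroup F]
    [Module ℝ E] [Module ℝ F] (A : E →ₗ[ℝ] F) (K : Submodule ℝ E) (ε : ℝ) : Prop :=
  ∀ x ∈ K, (1 - ε) * ‖x‖ ≤ ‖A x‖ ∧ ‖A x‖ ≤ (1 + ε) * ‖x‖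

namespace IsNearIsometryOn

variable {E F : Type*} [NormedAddCommGroup E] [InnerProductSpace ℝ E]
  [NormedAddCommGroup F] [InnerProductSpace ℝ F]
  {A : E →ₗ[ℝ] F} {K : Submodule ℝ E} {ε : ℝ} {x y : E}

lemma nonneg (hA : IsNearIsometryOn A K ε) (hx : x ∈ K) (hx0 : x ≠ 0) : 0 ≤ ε := by
  obtain ⟨hlo, hhi⟩ := hA x hx
  have := norm_pos_iff.mpr hx0
  nlinarith

lemma abs_norm_sq_sub_norm_sq_le (hA : IsNearIsometryOn A K ε) (hx : x ∈ K) :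
    |‖A x‖ ^ 2 - ‖x‖ ^ 2| ≤ (2 * ε + ε ^ 2) * ‖x‖ ^ 2 := by
  obtain ⟨hlo, hhi⟩ := hA x hx
  have := norm_nonneg x
  have := norm_nonneg (A x)
  rw [abs_le]
  constructor <;> nlinarith

lemma abs_inner_sub_inner_le_half (hA : IsNearIsometryOn A K ε) (hx : x ∈ K) (hy : y ∈ K) :
    |⟪A x, A y⟫ - ⟪x, y⟫| ≤ (2 * ε + ε ^ 2) * (‖x‖ ^ 2 + ‖y‖ ^ 2) / 2 := by
  have hadd := hA.abs_norm_sq_sub_norm_sq_le (K.add_mem hx hy)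
  have hsub := hA.abs_norm_sq_sub_norm_sq_le (K.sub_mem hx hy)
  rw [map_add, norm_add_sq_real, norm_add_sq_real] at hadd
  rw [map_sub, norm_sub_sq_real, norm_sub_sq_real] at hsub
  rw [abs_le] at hadd hsub ⊢
  have hpar := parallelogram_law_with_norm ℝ x y
  constructor <;> nlinarith [hadd.1, hadd.2, hsub.1, hsub.2]

lemma abs_inner_sub_inner_le (hA : IsNearIsometryOn A K ε) (hx : x ∈ K) (hy : y ∈ K) :
    |⟪A x, A y⟫ - ⟪x, y⟫| ≤ (2 * ε + ε ^ 2) * ‖x‖ * ‖y‖ := by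
  rcases eq_or_ne x 0 with rfl | hx0
  · simp
  rcases eq_or_ne y 0 with rfl | hy0
  · simp
  have hxpos := norm_pos_iff.mpr hx0
  have hypos := norm_pos_iff.mpr hy0
  -- Apply the polarized bound to `‖y‖ • x` and `‖x‖ • y`, which have the same norm.
  have h := hA.abs_inner_sub_inner_le_half (K.smul_mem ‖y‖ hx) (K.smul_mem ‖x‖ hy)
  simp only [map_smul, real_inner_smul_left, real_inner_smul_right, norm_smul, norm_norm] at h
  rw [← mul_sub, ← mul_sub, abs_mul, abs_mul, abs_of_pos hxpos, abs_of_pos hypos] at h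
  have hxy := mul_pos hxpos hypos
  refine le_of_mul_le_mul_left ?_ hxy
  nlinarith

end IsNearIsometryOn

def supported {d : ℕ} (T : Finset (Fin d)) : Submodule ℝ (EuclideanSpace ℝ (Fin d)) where
  carrier := {x | ∀ i ∉ T, x i = 0}
  add_mem' hx hy i hi := by simp [hx i hi, hy i hi]
  zero_mem' _ _ := rfl
  smul_mem' c x hx i hi := by simp [hx i hi]

section Coordinates

variable {d : ℕ}

lemma supported_mono {S T : Finset (Fin d)} (h : S ⊆ T) : supported S ≤ supported T :=
  fun _ hx i hi => hx i (fun hiS => hi (h hiS))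

lemma mem_supported_suppF (v : EuclideanSpace ℝ (Fin d)) : v ∈ supported (suppF v) := by
  intro i hi
  simpa [suppF] using hi

lemma restr_mem_supported (T : Finset (Fin d)) (w : EuclideanSpace ℝ (Fin d)) :
    restr T w ∈ supported T := by
  intro i hi
  simp [restr, hi]

lemma restr_sub (T : Finset (Fin d)) (u v : EuclideanSpace ℝ (Fin d)) :
    restr T u - restr T v = restr T (u - v) := by
  ext i
  by_cases hi : i ∈ T <;> simp [restr, hi]

lemma inner_restr_self (T : Finset (Fin d)) (z : EuclideanSpace ℝ (Fin d)) :
    ⟪restr T z, z⟫ = ‖restr T z‖ ^ 2 := by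
  rw [← real_inner_self_eq_norm_sq]
  simp only [PiLp.inner_apply, RCLike.inner_apply, conj_trivial]
  refine Finset.sum_congr rfl fun i _ => ?_
  by_cases hi : i ∈ T <;> simp [restr, hi]

lemma RIC.isNearIsometryOn {N m : ℕ} {Φ : Matrix (Fin N) (Fin d) ℝ} {ε : ℝ} (hΦ : RIC Φ m ε)
    {T : Finset (Fin d)} (hT : T.card ≤ m) :
    IsNearIsometryOn (Matrix.toEuclideanLin Φ) (supported T) ε := by
  refine fun x hx => hΦ x ((Finset.card_le_card fun i hi => ?_).trans hT)
  by_contra hiT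
  simp [hx i hiT] at hi

lemma inner_toEuclideanLin_transpose {N : ℕ} (Φ : Matrix (Fin N) (Fin d) ℝ)
    (x : EuclideanSpace ℝ (Fin d)) (y : EuclideanSpace ℝ (Fin N)) :
    ⟪Matrix.toEuclideanLin Φ x, y⟫ = ⟪x, Matrix.toEuclideanLin Φ.transpose y⟫ := by
  rw [← Matrix.conjTranspose_eq_transpose_of_trivial, Matrix.toEuclideanLin_conjTranspose_eq_adjoint,
    LinearMap.adjoint_inner_right]

end Coordinates

theorem local_approximation_general {N d n : ℕ} (Φ : Matrix (Fin N) (Fin d) ℝ)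
    (ε : ℝ) (hε' : ε ≤ 0.03) (hΦ : RIC Φ (2 * n) ε)
    (v : EuclideanSpace ℝ (Fin d)) (hv : msparse n v)
    (I : Finset (Fin d)) (hI : I.card ≤ n) :
    ‖restr I (Matrix.toEuclideanLin Φ.transpose (Matrix.toEuclideanLin Φ v)) - restr I v‖
      ≤ 2.03 * ε * ‖v‖ := by
  rcases eq_or_ne v 0 with rfl | hv0
  · simp [restr]
  set A := Matrix.toEuclideanLin Φ
  set w := restr I (Matrix.toEuclideanLin Φ.transpose (A v) - v)
  rw [restr_sub]
  have hT : (I ∪ suppF v).card ≤ 2 * n := by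
    have hsupp : (suppF v).card ≤ n := hv
    have := card_union_le I (suppF v)
    omega
  have hA := hΦ.isNearIsometryOn hT
  have hwT : w ∈ supported (I ∪ suppF v) :=
    supported_mono subset_union_left (restr_mem_supported I _)
  have hvT : v ∈ supported (I ∪ suppF v) :=
    supported_mono subset_union_right (mem_supported_suppF v)
  have hε := hA.nonneg hvT hv0
  have hw : ‖w‖ * ‖w‖ ≤ ‖w‖ * ((2 * ε + ε ^ 2) * ‖v‖) :=
    calc ‖w‖ * ‖w‖ = ⟪A w, A v⟫ - ⟪w, v⟫ := by
          rw [inner_toEuclideanLin_transpose, ← inner_sub_right, inner_restr_self, sq]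
      _ ≤ |⟪A w, A v⟫ - ⟪w, v⟫| := le_abs_self _
      _ ≤ (2 * ε + ε ^ 2) * ‖w‖ * ‖v‖ := hA.abs_inner_sub_inner_le hwT hvT
      _ = ‖w‖ * ((2 * ε + ε ^ 2) * ‖v‖) := by ring
  calc ‖w‖ ≤ (2 * ε + ε ^ 2) * ‖v‖ := by
        rcases (norm_nonneg w).eq_or_lt with h0 | hpos
        · rw [← h0]; positivity
        · exact le_of_mul_le_mul_left hw hpos
    _ ≤ 2.03 * ε * ‖v‖ := by gcongr; nlinarith

/-- Local approximation: under RIC with parameters `(2n, ε)`, `0 < ε ≤ 0.03`, for every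
`n`-sparse `v` and every index set `I` with `|I| ≤ n`, the observation vector `u = Φ*Φv`
satisfies `‖u|_I − v|_I‖₂ ≤ 2.03 ε ‖v‖₂`. -/
theorem local_approximation {N d n : ℕ} (Φ : Matrix (Fin N) (Fin d) ℝ)
    (ε : ℝ) (hε : 0 < ε) (hε' : ε ≤ 0.03) (hΦ : RIC Φ (2 * n) ε)
    (v : EuclideanSpace ℝ (Fin d)) (hv : msparse n v)
    (I : Finset (Fin d)) (hI : I.card ≤ n) :
    ‖restr I (Matrix.toEuclideanLin Φ.transpose (Matrix.toEuclideanLin Φ v)) - restr I v‖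
      ≤ 2.03 * ε * ‖v‖ :=
  local_approximation_general Φ ε hε' hΦ v hv I hI
end
end

section
/- (Almost orthogonality of columns.) Assume the N×d real matrix Φ satisfies the Restricted Isometry Condition with parameters (2n, ε), where 0 < ε ≤ 0.03. Let I, J ⊆ {1,…,d} be disjoint index sets with |I ∪ J| ≤ 2n, and let P_I and P_J denote the orthogonal projections in ℝ^N onto range(Φ_I) and range(Φ_J) respectively. Then ‖P_I P_J z‖₂ ≤ 2.2 ε ‖z‖₂ for every z ∈ ℝ^N; that is, the operator norm of P_I P_J is at most 2.2 ε. -/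
/-! Polarization: for orthogonal `u, v`, `4⟪Φu, Φv⟫ = ‖Φ(u + v)‖² - ‖Φ(u - v)‖²`. When `u, v` are
supported on the disjoint sets `I, J`, the vectors `u ± v` are `2n`-sparse of squared norm
`‖u‖² + ‖v‖²`, so RIC bounds `|⟪Φu, Φv⟫|` by `ε (‖u‖² + ‖v‖²)`, i.e. by `2ε ‖u‖ ‖v‖` after rescaling
`u, v` to equal norms. With `‖Φu‖ ≥ (1 - ε) ‖u‖` this gives `|⟪x, y⟫| ≤ 2ε / (1 - ε)² ‖x‖ ‖y‖`
for `x ∈ range Φ_I`, `y ∈ range Φ_J`, and `2 / (1 - ε)² ≤ 2.2` for `ε ≤ 0.03`. Finally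
`‖P_I w‖² = ⟪P_I w, w⟫` turns this bound on inner products into one on `‖P_I w‖` for `w = P_J z`. -/

open Finset

noncomputable section

open scoped InnerProductSpace

def NearIsometryOn {E F : Type*} [NormedAddCommGroup E] [NormedAddCommGroup F] [Module ℝ E]
    [Module ℝ F] (T : E →ₗ[ℝ] F) (K : Submodule ℝ E) (ε : ℝ) : Prop :=
  ∀ w ∈ K, (1 - ε) * ‖w‖ ≤ ‖T w‖ ∧ ‖T w‖ ≤ (1 + ε) * ‖w‖

namespace NearIsometryOn

variable {E F : Type*} [NormedAddCommGroup E] [InnerProductSpace ℝ E] [NormedAddCommGroup F]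
  [InnerProductSpace ℝ F] {T : E →ₗ[ℝ] F} {K : Submodule ℝ E} {ε : ℝ} {u v : E}

theorem sq_norm_map_bounds (hT : NearIsometryOn T K ε) (hε : ε ≤ 1) {w : E} (hw : w ∈ K) :
    (1 - ε) ^ 2 * ‖w‖ ^ 2 ≤ ‖T w‖ ^ 2 ∧ ‖T w‖ ^ 2 ≤ (1 + ε) ^ 2 * ‖w‖ ^ 2 := by
  obtain ⟨hlow, hup⟩ := hT w hw
  rw [← mul_pow, ← mul_pow]
  exact ⟨pow_le_pow_left₀ (mul_nonneg (sub_nonneg.2 hε) (norm_nonneg _)) hlow 2,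
    pow_le_pow_left₀ (norm_nonneg _) hup 2⟩

theorem abs_inner_map_le_sq_add_sq (hT : NearIsometryOn T K ε) (hε : ε ≤ 1) (hu : u ∈ K)
    (hv : v ∈ K) (huv : ⟪u, v⟫_ℝ = 0) :
    |⟪T u, T v⟫_ℝ| ≤ ε * (‖u‖ ^ 2 + ‖v‖ ^ 2) := by
  have hadd : ‖u + v‖ ^ 2 = ‖u‖ ^ 2 + ‖v‖ ^ 2 := by rw [norm_add_sq_real, huv]; ring
  have hsub : ‖u - v‖ ^ 2 = ‖u‖ ^ 2 + ‖v‖ ^ 2 := by rw [norm_sub_sq_real, huv]; ring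
  have hpolar : 4 * ⟪T u, T v⟫_ℝ = ‖T (u + v)‖ ^ 2 - ‖T (u - v)‖ ^ 2 := by
    rw [map_add, map_sub, norm_add_sq_real, norm_sub_sq_real]; ring
  obtain ⟨hadd_low, hadd_up⟩ := hT.sq_norm_map_bounds hε (K.add_mem hu hv)
  obtain ⟨hsub_low, hsub_up⟩ := hT.sq_norm_map_bounds hε (K.sub_mem hu hv)
  rw [abs_le]
  constructor <;> nlinarith

theorem abs_inner_map_le (hT : NearIsometryOn T K ε) (hε : ε ≤ 1) (hu : u ∈ K) (hv : v ∈ K)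
    (huv : ⟪u, v⟫_ℝ = 0) : |⟪T u, T v⟫_ℝ| ≤ 2 * ε * ‖u‖ * ‖v‖ := by
  rcases eq_or_ne u 0 with rfl | hu0
  · simp
  rcases eq_or_ne v 0 with rfl | hv0
  · simp
  have hpos : 0 < ‖u‖ * ‖v‖ := mul_pos (norm_pos_iff.2 hu0) (norm_pos_iff.2 hv0)
  -- rescale so that both vectors have norm `‖u‖ * ‖v‖`
  have h := hT.abs_inner_map_le_sq_add_sq hε (K.smul_mem ‖v‖ hu) (K.smul_mem ‖u‖ hv)
    (by rw [real_inner_smul_left, real_inner_smul_right, huv, mul_zero, mul_zero])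
  rw [map_smul, map_smul, real_inner_smul_left, real_inner_smul_right, norm_smul, norm_smul,
    norm_norm, norm_norm, abs_mul, abs_mul, abs_norm, abs_norm] at h
  refine le_of_mul_le_mul_right ?_ hpos
  nlinarith

theorem abs_inner_map_le_mul_norm_map (hT : NearIsometryOn T K ε) (hε₀ : 0 ≤ ε) (hε₁ : ε < 1)
    (hu : u ∈ K) (hv : v ∈ K) (huv : ⟪u, v⟫_ℝ = 0) :
    |⟪T u, T v⟫_ℝ| ≤ 2 * ε / (1 - ε) ^ 2 * ‖T u‖ * ‖T v‖ := by
  have hε : 0 < 1 - ε := sub_pos.2 hε₁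
  have hnorms : (1 - ε) ^ 2 * (‖u‖ * ‖v‖) ≤ ‖T u‖ * ‖T v‖ := by
    rw [sq, mul_mul_mul_comm]
    exact mul_le_mul (hT u hu).1 (hT v hv).1 (by positivity) (norm_nonneg _)
  calc |⟪T u, T v⟫_ℝ| ≤ 2 * ε * ‖u‖ * ‖v‖ := hT.abs_inner_map_le hε₁.le hu hv huv
    _ = 2 * ε / (1 - ε) ^ 2 * ((1 - ε) ^ 2 * (‖u‖ * ‖v‖)) := by field_simp
    _ ≤ 2 * ε / (1 - ε) ^ 2 * (‖T u‖ * ‖T v‖) := by gcongr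
    _ = 2 * ε / (1 - ε) ^ 2 * ‖T u‖ * ‖T v‖ := by ring

end NearIsometryOn

theorem Submodule.norm_orthogonalProjectionOnto_le_of_inner_le {E : Type*}
    [NormedAddCommGroup E] [InnerProductSpace ℝ E] (K : Submodule ℝ E) [K.HasOrthogonalProjection]
    {c : ℝ} (hc : 0 ≤ c) {w : E} (h : ∀ x ∈ K, ⟪x, w⟫_ℝ ≤ c * ‖x‖ * ‖w‖) :
    ‖(K.orthogonalProjectionOnto w : E)‖ ≤ c * ‖w‖ := by
  set q : E := ↑(K.orthogonalProjectionOnto w)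
  rcases (norm_nonneg q).eq_or_lt with hq | hq
  · rw [← hq]; positivity
  have : ‖q‖ * ‖q‖ ≤ c * ‖w‖ * ‖q‖ :=
    calc ‖q‖ * ‖q‖ = ⟪q, w⟫_ℝ := by
          rw [← real_inner_self_eq_norm_mul_norm, ← K.coe_inner,
            K.inner_orthogonalProjectionOnto_eq_of_mem_left]
      _ ≤ c * ‖q‖ * ‖w‖ := h q (K.orthogonalProjectionOnto w).2
      _ = c * ‖w‖ * ‖q‖ := by ring
  exact le_of_mul_le_mul_right this hq

def supportedOn {ι : Type*} (S : Finset ι) : Submodule ℝ (EuclideanSpace ℝ ι) where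
  carrier := {w | ∀ i ∉ S, w i = 0}
  add_mem' hu hv i hi := by simp [hu i hi, hv i hi]
  zero_mem' _ _ := rfl
  smul_mem' c _ hw i hi := by simp [hw i hi]

section supportedOn

variable {ι : Type*} {S T : Finset ι} {u v : EuclideanSpace ℝ ι}

theorem supportedOn_mono (h : S ⊆ T) : supportedOn S ≤ supportedOn T :=
  fun _ hu i hi => hu i (fun hiS => hi (h hiS))

theorem inner_eq_zero_of_mem_supportedOn [Fintype ι] (hST : Disjoint S T) (hu : u ∈ supportedOn S)
    (hv : v ∈ supportedOn T) : ⟪u, v⟫_ℝ = 0 := by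
  refine Finset.sum_eq_zero fun i _ => ?_
  by_cases hi : i ∈ S
  · simp [hv i (Finset.disjoint_left.1 hST hi)]
  · simp [hu i hi]

end supportedOn

theorem msparse_of_mem_supportedOn {d : ℕ} {S : Finset (Fin d)} {w : EuclideanSpace ℝ (Fin d)}
    (hw : w ∈ supportedOn S) : msparse S.card w :=
  Finset.card_le_card fun i hi => by_contra fun hiS => (Finset.mem_filter.1 hi).2 (hw i hiS)

theorem RIC.nearIsometryOn {N d m : ℕ} {Φ : Matrix (Fin N) (Fin d) ℝ} {ε : ℝ} (hΦ : RIC Φ m ε)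
    {S : Finset (Fin d)} (hS : S.card ≤ m) :
    NearIsometryOn (Matrix.toEuclideanLin Φ) (supportedOn S) ε :=
  fun _ hw => hΦ _ ((msparse_of_mem_supportedOn hw).trans hS)

theorem colSpan_le_map_supportedOn {N d : ℕ} (Φ : Matrix (Fin N) (Fin d) ℝ) (S : Finset (Fin d)) :
    colSpan Φ S ≤ (supportedOn S).map (Matrix.toEuclideanLin Φ) := by
  refine Submodule.span_le.2 ?_
  rintro _ ⟨j, hj, rfl⟩
  refine ⟨EuclideanSpace.single j 1, fun i hi => ?_, ?_⟩
  · simp [show i ≠ j from fun h => hi (h ▸ hj)]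
  · ext i
    simp [Matrix.toLpLin_apply]

theorem abs_inner_le_of_mem_colSpan {N d m : ℕ} {Φ : Matrix (Fin N) (Fin d) ℝ} {ε : ℝ}
    (hΦ : RIC Φ m ε) (hε₀ : 0 ≤ ε) (hε₁ : ε < 1) {I J : Finset (Fin d)} (hIJ : Disjoint I J)
    (hcard : (I ∪ J).card ≤ m) {x y : EuclideanSpace ℝ (Fin N)} (hx : x ∈ colSpan Φ I)
    (hy : y ∈ colSpan Φ J) : |⟪x, y⟫_ℝ| ≤ 2 * ε / (1 - ε) ^ 2 * ‖x‖ * ‖y‖ := by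
  obtain ⟨u, hu, rfl⟩ := colSpan_le_map_supportedOn Φ I hx
  obtain ⟨v, hv, rfl⟩ := colSpan_le_map_supportedOn Φ J hy
  exact (hΦ.nearIsometryOn hcard).abs_inner_map_le_mul_norm_map hε₀ hε₁
    (supportedOn_mono Finset.subset_union_left hu) (supportedOn_mono Finset.subset_union_right hv)
    (inner_eq_zero_of_mem_supportedOn hIJ hu hv)

/-- Almost orthogonality of columns: under RIC with parameters `(2n, ε)`, `0 < ε ≤ 0.03`,
for disjoint index sets `I, J` with `|I ∪ J| ≤ 2n`, the composition of the orthogonal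
projections onto `range(Φ_I)` and `range(Φ_J)` has operator norm at most `2.2 ε`. -/
theorem almost_orthogonality_of_columns {N d n : ℕ} (Φ : Matrix (Fin N) (Fin d) ℝ)
    (ε : ℝ) (hε : 0 < ε) (hε' : ε ≤ 0.03) (hΦ : RIC Φ (2 * n) ε)
    (I J : Finset (Fin d)) (hdisj : Disjoint I J) (hcard : (I ∪ J).card ≤ 2 * n)
    (z : EuclideanSpace ℝ (Fin N)) :
    ‖(Submodule.orthogonalProjection (colSpan Φ I)
        ((Submodule.orthogonalProjection (colSpan Φ J) z : EuclideanSpace ℝ (Fin N)))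
        : EuclideanSpace ℝ (Fin N))‖ ≤ 2.2 * ε * ‖z‖ := by
  set w : EuclideanSpace ℝ (Fin N) := ↑((colSpan Φ J).orthogonalProjectionOnto z)
  set c := 2 * ε / (1 - ε) ^ 2
  have hc₀ : 0 ≤ c := by positivity
  have hc : c ≤ 2.2 * ε := by
    have h : (2 : ℝ) ≤ 2.2 * (1 - ε) ^ 2 := by nlinarith
    rw [div_le_iff₀ (by nlinarith)]
    nlinarith [mul_le_mul_of_nonneg_left h hε.le]
  have hinner : ∀ x ∈ colSpan Φ I, ⟪x, w⟫_ℝ ≤ c * ‖x‖ * ‖w‖ := fun x hx =>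
    (le_abs_self _).trans <| abs_inner_le_of_mem_colSpan hΦ hε.le (by linarith) hdisj hcard hx
      ((colSpan Φ J).orthogonalProjectionOnto z).2
  calc ‖((colSpan Φ I).orthogonalProjectionOnto w : EuclideanSpace ℝ (Fin N))‖
      ≤ c * ‖w‖ := (colSpan Φ I).norm_orthogonalProjectionOnto_le_of_inner_le hc₀ hinner
    _ ≤ c * ‖z‖ := by gcongr; exact (colSpan Φ J).norm_orthogonalProjectionOnto_apply_le z
    _ ≤ 2.2 * ε * ‖z‖ := by gcongr
end
end

section
/- Assume the N×d real matrix Φ satisfies the Restricted Isometry Condition with parameters (2n, ε), where 0 < ε ≤ 0.03. Let a, b ∈ ℝ^d have disjoint supports with |supp(a) ∪ supp(b)| ≤ 2n. Then the images of a and b under Φ are almost orthogonal: |⟨Φa, Φb⟩| ≤ 2.03 ε ‖a‖₂ ‖b‖₂. -/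
/-!
Polarization: `4⟪Φa, Φb⟫ = ‖Φ(a + b)‖² - ‖Φ(a - b)‖²`. Since `a ⊥ b`, both `a + b` and `a - b` have
squared norm `‖a‖² + ‖b‖²`, and both are `2n`-sparse, so the RIC squeezes the difference into
`((1 + ε)² - (1 - ε)²)(‖a‖² + ‖b‖²) = 4ε(‖a‖² + ‖b‖²)`. Rescaling `a` and `b` to equal norms turns
`ε(‖a‖² + ‖b‖²)` into `2ε‖a‖‖b‖ ≤ 2.03ε‖a‖‖b‖`.
-/

open Finset RealInnerProductSpace

noncomputable section

lemma sq_bounds_of_ric_bounds {r s ε : ℝ} (hε : ε ≤ 1) (hr : 0 ≤ r)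
    (h : (1 - ε) * r ≤ s ∧ s ≤ (1 + ε) * r) :
    (1 - ε) ^ 2 * r ^ 2 ≤ s ^ 2 ∧ s ^ 2 ≤ (1 + ε) ^ 2 * r ^ 2 := by
  have hlow : 0 ≤ (1 - ε) * r := mul_nonneg (by linarith) hr
  rw [← mul_pow, ← mul_pow]
  exact ⟨pow_le_pow_left₀ hlow h.1 2, pow_le_pow_left₀ (hlow.trans h.1) h.2 2⟩

lemma abs_inner_map_le_of_ric_bounds {E F : Type*} [NormedAddCommGroup E] [InnerProductSpace ℝ E]
    [NormedAddCommGroup F] [InnerProductSpace ℝ F] (T : E →ₗ[ℝ] F) {ε : ℝ} (hε : ε ≤ 1)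
    {x y : E} (hxy : ⟪x, y⟫ = 0)
    (hadd : (1 - ε) * ‖x + y‖ ≤ ‖T (x + y)‖ ∧ ‖T (x + y)‖ ≤ (1 + ε) * ‖x + y‖)
    (hsub : (1 - ε) * ‖x - y‖ ≤ ‖T (x - y)‖ ∧ ‖T (x - y)‖ ≤ (1 + ε) * ‖x - y‖) :
    |⟪T x, T y⟫| ≤ ε * (‖x‖ ^ 2 + ‖y‖ ^ 2) := by
  have hadd_sq := sq_bounds_of_ric_bounds hε (norm_nonneg _) hadd
  have hsub_sq := sq_bounds_of_ric_bounds hε (norm_nonneg _) hsub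
  rw [map_add, norm_add_sq_real, norm_add_sq_real, hxy] at hadd_sq
  rw [map_sub, norm_sub_sq_real, norm_sub_sq_real, hxy] at hsub_sq
  rw [abs_le]
  constructor <;> linarith

lemma suppF_smul_subset {d : ℕ} (c : ℝ) (v : EuclideanSpace ℝ (Fin d)) :
    suppF (c • v) ⊆ suppF v := by
  intro i
  simp +contextual [suppF]

lemma suppF_add_subset {d : ℕ} (v w : EuclideanSpace ℝ (Fin d)) :
    suppF (v + w) ⊆ suppF v ∪ suppF w := by
  intro i hi
  simp only [suppF, mem_filter, mem_union, mem_univ, true_and] at hi ⊢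
  by_contra! h
  exact hi (by simp [h.1, h.2])

lemma suppF_sub_subset {d : ℕ} (v w : EuclideanSpace ℝ (Fin d)) :
    suppF (v - w) ⊆ suppF v ∪ suppF w := by
  intro i hi
  simp only [suppF, mem_filter, mem_union, mem_univ, true_and] at hi ⊢
  by_contra! h
  exact hi (by simp [h.1, h.2])

lemma inner_eq_zero_of_disjoint_suppF {d : ℕ} {v w : EuclideanSpace ℝ (Fin d)}
    (h : Disjoint (suppF v) (suppF w)) : ⟪v, w⟫ = 0 := by
  rw [PiLp.inner_apply]
  refine Finset.sum_eq_zero fun i _ => ?_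
  by_cases hv : v i = 0
  · simp [hv]
  · have hw : w i = 0 := by
      by_contra hw
      exact disjoint_left.mp h (by simpa [suppF] using hv) (by simpa [suppF] using hw)
    simp [hw]

lemma abs_inner_toEuclideanLin_le_of_RIC {N d m : ℕ} {Φ : Matrix (Fin N) (Fin d) ℝ} {ε : ℝ}
    (hε : ε ≤ 1) (hΦ : RIC Φ m ε) {a b : EuclideanSpace ℝ (Fin d)}
    (hdisj : Disjoint (suppF a) (suppF b)) (hcard : (suppF a ∪ suppF b).card ≤ m) :
    |⟪Matrix.toEuclideanLin Φ a, Matrix.toEuclideanLin Φ b⟫| ≤ ε * (‖a‖ ^ 2 + ‖b‖ ^ 2) :=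
  abs_inner_map_le_of_ric_bounds _ hε (inner_eq_zero_of_disjoint_suppF hdisj)
    (hΦ _ ((card_le_card (suppF_add_subset a b)).trans hcard))
    (hΦ _ ((card_le_card (suppF_sub_subset a b)).trans hcard))

lemma abs_inner_toEuclideanLin_le_two_mul_of_RIC {N d m : ℕ} {Φ : Matrix (Fin N) (Fin d) ℝ}
    {ε : ℝ} (hε : ε ≤ 1) (hΦ : RIC Φ m ε) {a b : EuclideanSpace ℝ (Fin d)}
    (hdisj : Disjoint (suppF a) (suppF b)) (hcard : (suppF a ∪ suppF b).card ≤ m) :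
    |⟪Matrix.toEuclideanLin Φ a, Matrix.toEuclideanLin Φ b⟫| ≤ 2 * ε * (‖a‖ * ‖b‖) := by
  set T := Matrix.toEuclideanLin Φ
  rcases (mul_nonneg (norm_nonneg a) (norm_nonneg b)).eq_or_lt with hP | hP
  · obtain rfl | rfl : a = 0 ∨ b = 0 := by simpa using hP.symm
    all_goals simp
  set P := ‖a‖ * ‖b‖
  have hsa := suppF_smul_subset ‖b‖ a
  have hsb := suppF_smul_subset ‖a‖ b
  have key := abs_inner_toEuclideanLin_le_of_RIC hε hΦ (hdisj.mono hsa hsb)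
    ((card_le_card (union_subset_union hsa hsb)).trans hcard)
  have hinner : ⟪T (‖b‖ • a), T (‖a‖ • b)⟫ = P * ⟪T a, T b⟫ := by
    rw [map_smul, map_smul, real_inner_smul_left, real_inner_smul_right]
    ring
  have hnorm_a : ‖‖b‖ • a‖ = P := by rw [norm_smul, norm_norm, mul_comm]
  have hnorm_b : ‖‖a‖ • b‖ = P := by rw [norm_smul, norm_norm]
  rw [hinner, hnorm_a, hnorm_b, abs_mul, abs_of_pos hP] at key
  refine le_of_mul_le_mul_left ?_ hP
  calc P * |⟪T a, T b⟫| ≤ ε * (P ^ 2 + P ^ 2) := key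
    _ = P * (2 * ε * P) := by ring

/-- Almost orthogonality of images: under RIC with parameters `(2n, ε)`, `0 < ε ≤ 0.03`,
if `a, b ∈ ℝ^d` have disjoint supports with `|supp(a) ∪ supp(b)| ≤ 2n`, then
`|⟨Φa, Φb⟩| ≤ 2.03 ε ‖a‖₂ ‖b‖₂`. -/
theorem almost_orthogonal_images {N d n : ℕ} (Φ : Matrix (Fin N) (Fin d) ℝ)
    (ε : ℝ) (hε : 0 < ε) (hε' : ε ≤ 0.03) (hΦ : RIC Φ (2 * n) ε)
    (a b : EuclideanSpace ℝ (Fin d)) (hdisj : Disjoint (suppF a) (suppF b))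
    (hcard : (suppF a ∪ suppF b).card ≤ 2 * n) :
    |(⟪Matrix.toEuclideanLin Φ a, Matrix.toEuclideanLin Φ b⟫)|
      ≤ 2.03 * ε * ‖a‖ * ‖b‖ := by
  calc |⟪Matrix.toEuclideanLin Φ a, Matrix.toEuclideanLin Φ b⟫|
      ≤ 2 * ε * (‖a‖ * ‖b‖) :=
        abs_inner_toEuclideanLin_le_two_mul_of_RIC (by linarith) hΦ hdisj hcard
    _ ≤ 2.03 * ε * ‖a‖ * ‖b‖ := by
        have := mul_nonneg hε.le (mul_nonneg (norm_nonneg a) (norm_nonneg b))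
        linarith
end
end

section
/- (Regularizing the energy.) Let n ≥ 2. Assume the N×d real matrix Φ satisfies the Restricted Isometry Condition with parameters (2n, ε), where 0 < ε ≤ 0.03. Let v ∈ ℝ^d be n-sparse and let I ⊆ {1,…,d} satisfy |supp(v) ∪ I| ≤ 2n. Set x = Φv, F = range(Φ_I), r = P_{F^⊥} x, v₀ = v|_{supp(v)∖I}, and u = Φ*r. Let J ⊆ {1,…,d} be a set of biggest coordinates of u, i.e. J ⊆ supp(u), |u(i)| ≥ |u(j)| for all i ∈ J and j ∉ J, and |J| = min(n, |supp(u)|). Let J₀ ⊆ J be a subset with comparable coordinates (|u(i)| ≤ 2|u(j)| for all i, j ∈ J₀) whose energy ‖u|_{J₀}‖₂ is maximal among all subsets of J with comparable coordinates. Then ‖u|_{J₀}‖₂ ≥ (0.32/√(log n)) ‖v₀‖₂. -/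
/-!
Since `Φ (v|_I) ∈ F`, the residual is `r = P_{F^⊥} (Φ v₀) = Φ (v₀ - y)` for some `y` supported
on `I`, and `v₀ ⟂ y`, so the RIC gives `‖r‖ ≥ (1 - ε) ‖v₀‖`. As `⟨u, v₀⟩ = ‖r‖²`, Cauchy–Schwarz
puts energy at least `(1 - ε)² ‖v₀‖` of `u` on `supp v₀`, hence on the `n` biggest coordinates `J`.
Cut `J` into the dyadic classes `M / 2^(k+1) < |u i| ≤ M / 2^k`, `k ≤ log₂ n`, where `M` is the
largest coordinate: the coordinates below all classes carry at most half of the energy of `J`, so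
one class, whose coordinates are comparable, carries a fraction `1 / (2 (log₂ n + 1))` of it.
-/

open Finset

noncomputable section

section Coordinates
variable {N d : ℕ}

theorem restr_apply (S : Finset (Fin d)) (w : EuclideanSpace ℝ (Fin d)) (i : Fin d) :
    restr S w i = if i ∈ S then w i else 0 := rfl

theorem norm_sq_restr (S : Finset (Fin d)) (w : EuclideanSpace ℝ (Fin d)) :
    ‖restr S w‖ ^ 2 = ∑ i ∈ S, w i ^ 2 := by
  simp [EuclideanSpace.norm_sq_eq, restr_apply, apply_ite, Finset.sum_ite_mem]

theorem apply_eq_zero_of_notMem_suppF {w : EuclideanSpace ℝ (Fin d)} {i : Fin d}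
    (hi : i ∉ suppF w) : w i = 0 := by
  simpa [suppF] using hi

theorem suppF_restr (S : Finset (Fin d)) (w : EuclideanSpace ℝ (Fin d)) :
    suppF (restr S w) = S ∩ suppF w := by
  ext i
  simp [suppF, restr_apply]

theorem restr_inter_suppF (S : Finset (Fin d)) (w : EuclideanSpace ℝ (Fin d)) :
    restr (S ∩ suppF w) w = restr S w := by
  ext i
  by_cases hi : w i = 0 <;> simp [restr_apply, suppF, hi]

theorem restr_sdiff_suppF_add_restr (I : Finset (Fin d)) (w : EuclideanSpace ℝ (Fin d)) :
    restr (suppF w \ I) w + restr I w = w := by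
  ext i
  by_cases hi : w i = 0 <;> by_cases hiI : i ∈ I <;> simp [restr_apply, suppF, hi, hiI]

theorem inner_restr_left {S : Finset (Fin d)} (u : EuclideanSpace ℝ (Fin d))
    {w : EuclideanSpace ℝ (Fin d)} (hw : ∀ i ∉ S, w i = 0) :
    inner ℝ (restr S u) w = inner ℝ u w := by
  simp only [PiLp.inner_apply, restr_apply]
  refine sum_congr rfl fun i _ => ?_
  split_ifs with hi <;> simp [hw, hi]

theorem toEuclideanLin_single (Φ : Matrix (Fin N) (Fin d) ℝ) (j : Fin d) :
    Matrix.toEuclideanLin Φ (EuclideanSpace.single j 1) = WithLp.toLp 2 (fun i => Φ i j) := by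
  ext i
  simp [Matrix.toLpLin_apply, EuclideanSpace.single]

theorem colSpan_eq_map (Φ : Matrix (Fin N) (Fin d) ℝ) (I : Finset (Fin d)) :
    colSpan Φ I = (Submodule.span ℝ ((EuclideanSpace.basisFun (Fin d) ℝ).toBasis '' I)).map
      (Matrix.toEuclideanLin Φ) := by
  rw [Submodule.map_span, Set.image_image, colSpan]
  simp [toEuclideanLin_single]

theorem mem_colSpan_iff {Φ : Matrix (Fin N) (Fin d) ℝ} {I : Finset (Fin d)}
    {f : EuclideanSpace ℝ (Fin N)} :
    f ∈ colSpan Φ I ↔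
      ∃ y : EuclideanSpace ℝ (Fin d), (∀ i ∉ I, y i = 0) ∧ Matrix.toEuclideanLin Φ y = f := by
  rw [colSpan_eq_map, Submodule.mem_map]
  refine exists_congr fun y => and_congr_left' ?_
  rw [Module.Basis.mem_span_image]
  simp [Set.subset_def, not_imp_comm]

end Coordinates

section Residual
variable {N d m : ℕ} {Φ : Matrix (Fin N) (Fin d) ℝ} {ε : ℝ}

theorem inner_transpose_starProjection (K : Submodule ℝ (EuclideanSpace ℝ (Fin N)))
    [K.HasOrthogonalProjection] (w : EuclideanSpace ℝ (Fin d)) :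
    inner ℝ (Matrix.toEuclideanLin Φ.transpose (K.starProjection (Matrix.toEuclideanLin Φ w))) w =
      ‖K.starProjection (Matrix.toEuclideanLin Φ w)‖ ^ 2 := by
  rw [← Matrix.conjTranspose_eq_transpose_of_trivial,
    Matrix.toEuclideanLin_conjTranspose_eq_adjoint, LinearMap.adjoint_inner_left]
  simpa using K.re_inner_starProjection_eq_normSq (Matrix.toEuclideanLin Φ w)

theorem one_sub_mul_norm_le_norm_starProjection_orthogonal (hΦ : RIC Φ m ε) (hε : ε ≤ 1)
    {I : Finset (Fin d)} {w : EuclideanSpace ℝ (Fin d)} (hwI : ∀ i ∈ I, w i = 0)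
    (hcard : #(suppF w ∪ I) ≤ m) :
    (1 - ε) * ‖w‖ ≤ ‖(colSpan Φ I)ᗮ.starProjection (Matrix.toEuclideanLin Φ w)‖ := by
  obtain ⟨y, hyI, hy⟩ := mem_colSpan_iff.mp
    ((colSpan Φ I).starProjection_apply_mem (Matrix.toEuclideanLin Φ w))
  have hresidual : (colSpan Φ I)ᗮ.starProjection (Matrix.toEuclideanLin Φ w) =
      Matrix.toEuclideanLin Φ (w - y) := by
    rw [Submodule.starProjection_orthogonal_val, map_sub, hy]
  have horth : inner ℝ w y = 0 := by
    simp only [PiLp.inner_apply]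
    refine sum_eq_zero fun i _ => ?_
    by_cases hi : i ∈ I <;> simp [hwI, hyI, hi]
  have hnorm : ‖w‖ ≤ ‖w - y‖ := by
    rw [← pow_le_pow_iff_left₀ (norm_nonneg _) (norm_nonneg _) two_ne_zero, norm_sub_sq_real,
      horth]
    nlinarith [sq_nonneg ‖y‖]
  have hsparse : msparse m (w - y) := by
    refine (card_le_card fun i hi => ?_).trans hcard
    simp only [mem_filter, mem_univ, true_and] at hi
    by_contra hiw
    simp only [mem_union, not_or] at hiw
    exact hi (by simp [apply_eq_zero_of_notMem_suppF hiw.1, hyI i hiw.2])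
  rw [hresidual]
  calc (1 - ε) * ‖w‖ ≤ (1 - ε) * ‖w - y‖ := mul_le_mul_of_nonneg_left hnorm (sub_nonneg.mpr hε)
    _ ≤ _ := (hΦ _ hsparse).1

theorem sq_one_sub_mul_norm_le_norm_restr_suppF (hΦ : RIC Φ m ε) (hε : ε ≤ 1)
    {I : Finset (Fin d)} {w : EuclideanSpace ℝ (Fin d)} (hwI : ∀ i ∈ I, w i = 0)
    (hcard : #(suppF w ∪ I) ≤ m) :
    (1 - ε) ^ 2 * ‖w‖ ≤ ‖restr (suppF w) (Matrix.toEuclideanLin Φ.transpose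
      ((colSpan Φ I)ᗮ.starProjection (Matrix.toEuclideanLin Φ w)))‖ := by
  set r := (colSpan Φ I)ᗮ.starProjection (Matrix.toEuclideanLin Φ w)
  have hr := one_sub_mul_norm_le_norm_starProjection_orthogonal hΦ hε hwI hcard
  have hCS : ‖r‖ ^ 2 ≤ ‖restr (suppF w) (Matrix.toEuclideanLin Φ.transpose r)‖ * ‖w‖ := by
    rw [← inner_transpose_starProjection,
      ← inner_restr_left _ fun i hi => apply_eq_zero_of_notMem_suppF hi]
    exact real_inner_le_norm _ _
  rcases (norm_nonneg w).eq_or_lt with hw | hw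
  · simp [← hw]
  refine le_of_mul_le_mul_right ?_ hw
  nlinarith [mul_le_mul hr hr (by nlinarith) (norm_nonneg r)]

theorem starProjection_orthogonal_colSpan_restr_sdiff (I : Finset (Fin d))
    (v : EuclideanSpace ℝ (Fin d)) :
    (colSpan Φ I)ᗮ.starProjection (Matrix.toEuclideanLin Φ (restr (suppF v \ I) v)) =
      (colSpan Φ I)ᗮ.starProjection (Matrix.toEuclideanLin Φ v) := by
  have hvI : Matrix.toEuclideanLin Φ (restr I v) ∈ colSpan Φ I :=
    mem_colSpan_iff.mpr ⟨restr I v, fun i hi => by simp [restr_apply, hi], rfl⟩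
  conv_rhs => rw [← restr_sdiff_suppF_add_restr I v, map_add, map_add,
    Submodule.starProjection_orthogonal_apply_eq_zero hvI, add_zero]

end Residual

theorem Finset.sum_le_sum_of_card_le_of_forall_le {ι M : Type*} [AddCommMonoid M] [LinearOrder M]
    [IsOrderedAddMonoid M] {f : ι → M} {S J : Finset ι} (hcard : #S ≤ #J)
    (hf : ∀ i ∈ J, 0 ≤ f i) (hbig : ∀ i ∈ J, ∀ j ∉ J, f j ≤ f i) :
    ∑ i ∈ S, f i ≤ ∑ i ∈ J, f i := by
  classical
  rw [← sum_inter_add_sum_sdiff S J, ← sum_inter_add_sum_sdiff J S, inter_comm J S]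
  refine add_le_add le_rfl ?_
  have hcard' : #(S \ J) ≤ #(J \ S) := by
    have := card_sdiff_add_card_inter S J
    have := card_sdiff_add_card_inter J S
    rw [inter_comm] at this
    omega
  rcases (J \ S).eq_empty_or_nonempty with hJS | hJS
  · rw [hJS, card_empty, Nat.le_zero, card_eq_zero] at hcard'
    rw [hJS, hcard']
  obtain ⟨i₀, hi₀, hmin⟩ := (J \ S).exists_min_image f hJS
  have hi₀J := (mem_sdiff.mp hi₀).1
  calc ∑ j ∈ S \ J, f j ≤ #(S \ J) • f i₀ :=
        sum_le_card_nsmul _ _ _ fun j hj => hbig i₀ hi₀J j (mem_sdiff.mp hj).2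
    _ ≤ #(J \ S) • f i₀ := nsmul_le_nsmul_left (hf i₀ hi₀J) hcard'
    _ ≤ ∑ i ∈ J \ S, f i := card_nsmul_le_sum _ _ _ hmin

theorem norm_restr_le_norm_restr_of_forall_abs_le {d n : ℕ} {u : EuclideanSpace ℝ (Fin d)}
    {S J : Finset (Fin d)} (hS : #S ≤ n) (hJbig : ∀ i ∈ J, ∀ j ∉ J, |u j| ≤ |u i|)
    (hJcard : #J = min n #(suppF u)) :
    ‖restr S u‖ ≤ ‖restr J u‖ := by
  rw [← restr_inter_suppF, ← pow_le_pow_iff_left₀ (norm_nonneg _) (norm_nonneg _) two_ne_zero,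
    norm_sq_restr, norm_sq_restr]
  refine sum_le_sum_of_card_le_of_forall_le ?_ (fun i _ => sq_nonneg _)
    fun i hi j hj => sq_le_sq.mpr (hJbig i hi j hj)
  rw [hJcard]
  exact le_min ((card_le_card inter_subset_left).trans hS) (card_le_card inter_subset_right)

section Dyadic
variable {ι : Type*}

def dyadicClass (u : ι → ℝ) (J : Finset ι) (M : ℝ) (k : ℕ) : Finset ι :=
  J.filter fun i => M / 2 ^ (k + 1) < |u i| ∧ |u i| ≤ M / 2 ^ k

theorem abs_le_two_mul_of_mem_dyadicClass {u : ι → ℝ} {J : Finset ι} {M : ℝ} {k : ℕ} {i j : ι}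
    (hi : i ∈ dyadicClass u J M k) (hj : j ∈ dyadicClass u J M k) : |u i| ≤ 2 * |u j| := by
  simp only [dyadicClass, mem_filter] at hi hj
  calc |u i| ≤ M / 2 ^ k := hi.2.2
    _ = 2 * (M / 2 ^ (k + 1)) := by field_simp; ring
    _ ≤ 2 * |u j| := by linarith [hj.2.1]

open Function in
theorem pairwise_disjoint_dyadicClass (u : ι → ℝ) (J : Finset ι) {M : ℝ} (hM : 0 ≤ M) :
    Pairwise (Disjoint on dyadicClass u J M) := by
  refine (pairwise_disjoint_on _).mpr fun k k' hkk' => disjoint_left.mpr fun i hik hik' => ?_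
  simp only [dyadicClass, mem_filter] at hik hik'
  have : M / 2 ^ k' ≤ M / 2 ^ (k + 1) :=
    div_le_div_of_nonneg_left hM (by positivity) (pow_le_pow_right₀ one_le_two hkk')
  linarith [hik.2.1, hik'.2.2]

theorem exists_dyadic_index {M t : ℝ} (ht : t ≤ M) :
    ∀ K : ℕ, M / 2 ^ K < t → ∃ k < K, M / 2 ^ (k + 1) < t ∧ t ≤ M / 2 ^ k
  | 0, hK => absurd ht (by simpa using hK)
  | K + 1, hK => by
    by_cases h : M / 2 ^ K < t
    · obtain ⟨k, hk, hkt⟩ := exists_dyadic_index ht K h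
      exact ⟨k, by omega, hkt⟩
    · exact ⟨K, K.lt_succ_self, hK, not_lt.mp h⟩

theorem filter_subset_biUnion_dyadicClass [DecidableEq ι] {u : ι → ℝ} {J : Finset ι} {M : ℝ}
    (hM : ∀ i ∈ J, |u i| ≤ M) (K : ℕ) :
    J.filter (fun i => M / 2 ^ K < |u i|) ⊆ (range K).biUnion (dyadicClass u J M) := by
  intro i hi
  rw [mem_filter] at hi
  obtain ⟨k, hk, hki⟩ := exists_dyadic_index (hM i hi.1) K hi.2
  exact mem_biUnion.mpr ⟨k, mem_range.mpr hk, mem_filter.mpr ⟨hi.1, hki⟩⟩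

theorem sum_sq_filter_abs_le_le_card_mul_sq (u : ι → ℝ) (J : Finset ι) (c : ℝ) :
    ∑ i ∈ J.filter (fun i => |u i| ≤ c), u i ^ 2 ≤ #J * c ^ 2 :=
  calc _ ≤ ∑ _i ∈ J.filter (fun i => |u i| ≤ c), c ^ 2 := by
        refine sum_le_sum fun i hi => ?_
        have hc := (mem_filter.mp hi).2
        exact sq_le_sq' (by linarith [neg_abs_le (u i)]) ((le_abs_self _).trans hc)
    _ ≤ #J * c ^ 2 := by
        rw [sum_const, nsmul_eq_mul]
        gcongr
        exact filter_subset _ _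

theorem exists_comparable_subset_sum_sq_le (u : ι → ℝ) (J : Finset ι) (K : ℕ)
    (hK : 2 * #J ≤ 4 ^ K) :
    ∃ A ⊆ J, (∀ i ∈ A, ∀ j ∈ A, |u i| ≤ 2 * |u j|) ∧
      ∑ i ∈ J, u i ^ 2 ≤ 2 * K * ∑ i ∈ A, u i ^ 2 := by
  classical
  rcases J.eq_empty_or_nonempty with rfl | hJ
  · exact ⟨∅, by simp⟩
  obtain ⟨i₀, hi₀, hmax⟩ := J.exists_max_image (|u ·|) hJ
  set M := |u i₀|
  have hK0 : K ≠ 0 := by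
    rintro rfl
    have := hJ.card_pos
    omega
  obtain ⟨k, -, hk⟩ := (range K).exists_max_image (fun k => ∑ i ∈ dyadicClass u J M k, u i ^ 2)
    (nonempty_range_iff.mpr hK0)
  refine ⟨dyadicClass u J M k, filter_subset _ _,
    fun i hi j hj => abs_le_two_mul_of_mem_dyadicClass hi hj, ?_⟩
  have htail : ∑ i ∈ J.filter (fun i => |u i| ≤ M / 2 ^ K), u i ^ 2 ≤ (∑ i ∈ J, u i ^ 2) / 2 :=
    calc _ ≤ #J * (M / 2 ^ K) ^ 2 := sum_sq_filter_abs_le_le_card_mul_sq u J _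
      _ = (2 * #J : ℝ) / 4 ^ K * M ^ 2 / 2 := by
          rw [div_pow, ← pow_mul, mul_comm K, pow_mul]
          ring
      _ ≤ 1 * M ^ 2 / 2 := by
          gcongr
          exact div_le_one_of_le₀ (by exact_mod_cast hK) (by positivity)
      _ ≤ (∑ i ∈ J, u i ^ 2) / 2 := by
          rw [one_mul]
          gcongr
          simpa [M, sq_abs] using single_le_sum (fun i _ => sq_nonneg (u i)) hi₀
  have hclasses : ∑ i ∈ J.filter (fun i => ¬ |u i| ≤ M / 2 ^ K), u i ^ 2 ≤
      K * ∑ i ∈ dyadicClass u J M k, u i ^ 2 := by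
    calc _ ≤ ∑ i ∈ (range K).biUnion (dyadicClass u J M), u i ^ 2 := by
          refine sum_le_sum_of_subset_of_nonneg ?_ fun i _ _ => sq_nonneg (u i)
          simpa only [not_le] using filter_subset_biUnion_dyadicClass hmax K
      _ = ∑ k ∈ range K, ∑ i ∈ dyadicClass u J M k, u i ^ 2 :=
          sum_biUnion ((pairwise_disjoint_dyadicClass u J (abs_nonneg _)).set_pairwise _)
      _ ≤ K * ∑ i ∈ dyadicClass u J M k, u i ^ 2 := by
          simpa using sum_le_card_nsmul _ _ _ hk
  have := sum_filter_add_sum_filter_not J (fun i => |u i| ≤ M / 2 ^ K) (fun i => u i ^ 2)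
  linarith

end Dyadic

theorem two_mul_log_add_one_le {n : ℕ} (hn : 2 ≤ n) :
    2 * ((Nat.log 2 n + 1 : ℕ) : ℝ) ≤ 8 * Real.log n := by
  have hlog2 : 1 / 2 < Real.log 2 := by linarith [Real.log_two_gt_d9]
  have hpow : Nat.log 2 n * Real.log 2 ≤ Real.log n := by
    rw [← Real.log_pow]
    exact Real.log_le_log (by positivity) (by exact_mod_cast Nat.pow_log_le_self 2 (by omega))
  have h2n : Real.log 2 ≤ Real.log n := Real.log_le_log (by norm_num) (by exact_mod_cast hn)
  push_cast
  nlinarith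

theorem two_mul_card_le_four_pow_log {n m : ℕ} (hm : m ≤ n) : 2 * m ≤ 4 ^ (Nat.log 2 n + 1) := by
  have hn := Nat.lt_pow_succ_log_self one_lt_two n
  have h4 : 4 ^ (Nat.log 2 n + 1) = (2 ^ (Nat.log 2 n).succ) ^ 2 := by
    rw [← pow_mul, mul_comm, pow_mul]
    norm_num
  nlinarith

theorem norm_sq_restr_le_mul_log_of_forall_comparable_le {d n : ℕ} (hn : 2 ≤ n)
    {u : EuclideanSpace ℝ (Fin d)} {J J₀ : Finset (Fin d)} (hJ : #J ≤ n)
    (hmax : ∀ A ⊆ J, (∀ i ∈ A, ∀ j ∈ A, |u i| ≤ 2 * |u j|) → ‖restr A u‖ ≤ ‖restr J₀ u‖) :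
    ‖restr J u‖ ^ 2 ≤ 8 * Real.log n * ‖restr J₀ u‖ ^ 2 := by
  obtain ⟨A, hAJ, hAcomp, hA⟩ :=
    exists_comparable_subset_sum_sq_le u.ofLp J _ (two_mul_card_le_four_pow_log hJ)
  calc ‖restr J u‖ ^ 2 ≤ 2 * (Nat.log 2 n + 1 : ℕ) * ‖restr A u‖ ^ 2 := by
        rw [norm_sq_restr, norm_sq_restr]
        exact hA
    _ ≤ 8 * Real.log n * ‖restr J₀ u‖ ^ 2 := by
        gcongr ?_ * ?_ ^ 2
        exacts [two_mul_log_add_one_le hn, hmax A hAJ hAcomp]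

theorem div_sqrt_mul_le_of_sq_mul_sq_le {a b c L : ℝ} (hL : 0 < L) (ha : 0 ≤ a) (hb : 0 ≤ b)
    (hc : 0 ≤ c) (h : c ^ 2 * a ^ 2 ≤ L * b ^ 2) :
    c / Real.sqrt L * a ≤ b := by
  rw [div_mul_eq_mul_div, div_le_iff₀ (Real.sqrt_pos.mpr hL)]
  refine (pow_le_pow_iff_left₀ (by positivity) (by positivity) two_ne_zero).mp ?_
  rw [mul_pow, mul_pow, Real.sq_sqrt hL.le]
  linarith

theorem regularizing_the_energy_general {N d n : ℕ} (hn : 2 ≤ n) (Φ : Matrix (Fin N) (Fin d) ℝ)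
    (ε : ℝ) (hε' : ε ≤ 0.03) (hΦ : RIC Φ (2 * n) ε)
    (v : EuclideanSpace ℝ (Fin d)) (hv : msparse n v)
    (I : Finset (Fin d)) (hI : (suppF v ∪ I).card ≤ 2 * n)
    (x r : EuclideanSpace ℝ (Fin N)) (v₀ u : EuclideanSpace ℝ (Fin d))
    (hx : x = Matrix.toEuclideanLin Φ v)
    (hr : r = (Submodule.orthogonalProjection (colSpan Φ I)ᗮ x : EuclideanSpace ℝ (Fin N)))
    (hv₀ : v₀ = restr (suppF v \ I) v)
    (hu : u = Matrix.toEuclideanLin Φ.transpose r)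
    (J : Finset (Fin d))
    (hJbig : ∀ i ∈ J, ∀ j ∉ J, |u j| ≤ |u i|)
    (hJcard : J.card = min n (suppF u).card)
    (J₀ : Finset (Fin d))
    (hmax : ∀ A ⊆ J, (∀ i ∈ A, ∀ j ∈ A, |u i| ≤ 2 * |u j|) →
      ‖restr A u‖ ≤ ‖restr J₀ u‖) :
    0.32 / Real.sqrt (Real.log n) * ‖v₀‖ ≤ ‖restr J₀ u‖ := by
  have hsupp : suppF v₀ ⊆ suppF v := hv₀ ▸ (suppF_restr _ _).trans_subset inter_subset_right
  have hv₀I : ∀ i ∈ I, v₀ i = 0 := fun i hi => by simp [hv₀, restr_apply, hi]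
  have hr₀ : r = (colSpan Φ I)ᗮ.starProjection (Matrix.toEuclideanLin Φ v₀) := by
    rw [hv₀, starProjection_orthogonal_colSpan_restr_sdiff, ← hx, hr]
    rfl
  have henergy : (1 - ε) ^ 2 * ‖v₀‖ ≤ ‖restr (suppF v₀) u‖ := by
    rw [hu, hr₀]
    exact sq_one_sub_mul_norm_le_norm_restr_suppF hΦ (by linarith) hv₀I
      ((card_le_card (union_subset_union hsupp subset_rfl)).trans hI)
  have htop := norm_restr_le_norm_restr_of_forall_abs_le ((card_le_card hsupp).trans hv)
    hJbig hJcard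
  have hregular := norm_sq_restr_le_mul_log_of_forall_comparable_le hn
    (hJcard ▸ min_le_left _ _) hmax
  refine div_sqrt_mul_le_of_sq_mul_sq_le (Real.log_pos (by exact_mod_cast hn)) (norm_nonneg _)
    (norm_nonneg _) (by norm_num) ?_
  calc 0.32 ^ 2 * ‖v₀‖ ^ 2 ≤ (0.97 ^ 2 * ‖v₀‖) ^ 2 / 8 := by nlinarith [sq_nonneg ‖v₀‖]
    _ ≤ ((1 - ε) ^ 2 * ‖v₀‖) ^ 2 / 8 := by gcongr; linarith
    _ ≤ ‖restr J u‖ ^ 2 / 8 := by gcongr; exact henergy.trans htop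
    _ ≤ Real.log n * ‖restr J₀ u‖ ^ 2 := by linarith

/-- Regularizing the energy: in the setting of the ROMP iteration (RIC with parameters
`(2n, ε)`, `0 < ε ≤ 0.03`, `n ≥ 2`), if `J₀ ⊆ J` is a subset with comparable coordinates
of maximal energy among all such subsets of `J`, then
`‖u|_{J₀}‖₂ ≥ (0.32/√(log n)) ‖v₀‖₂`. -/
theorem regularizing_the_energy {N d n : ℕ} (hn : 2 ≤ n) (Φ : Matrix (Fin N) (Fin d) ℝ)
    (ε : ℝ) (hε : 0 < ε) (hε' : ε ≤ 0.03) (hΦ : RIC Φ (2 * n) ε)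
    (v : EuclideanSpace ℝ (Fin d)) (hv : msparse n v)
    (I : Finset (Fin d)) (hI : (suppF v ∪ I).card ≤ 2 * n)
    (x r : EuclideanSpace ℝ (Fin N)) (v₀ u : EuclideanSpace ℝ (Fin d))
    (hx : x = Matrix.toEuclideanLin Φ v)
    (hr : r = (Submodule.orthogonalProjection (colSpan Φ I)ᗮ x : EuclideanSpace ℝ (Fin N)))
    (hv₀ : v₀ = restr (suppF v \ I) v)
    (hu : u = Matrix.toEuclideanLin Φ.transpose r)
    (J : Finset (Fin d)) (hJsupp : J ⊆ suppF u)
    (hJbig : ∀ i ∈ J, ∀ j ∉ J, |u j| ≤ |u i|)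
    (hJcard : J.card = min n (suppF u).card)
    (J₀ : Finset (Fin d)) (hJ₀ : J₀ ⊆ J)
    (hcomp : ∀ i ∈ J₀, ∀ j ∈ J₀, |u i| ≤ 2 * |u j|)
    (hmax : ∀ A ⊆ J, (∀ i ∈ A, ∀ j ∈ A, |u i| ≤ 2 * |u j|) →
      ‖restr A u‖ ≤ ‖restr J₀ u‖) :
    0.32 / Real.sqrt (Real.log n) * ‖v₀‖ ≤ ‖restr J₀ u‖ :=
  regularizing_the_energy_general hn Φ ε hε' hΦ v hv I hI x r v₀ u hx hr hv₀ hu J hJbig hJcard J₀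
    hmax
end
end
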